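/- Let R be the transition relation of the four-layer NFA A(G) built from a simple graph G on n vertices. Every walk in A(G) from the start state q_0^1 to the accept state q_{n−1}^4 has length at least 3 and at most n + 2 + (n − 1) − 0; more precisely, the length of any such walk equals i + 3 + (n − 1 − l) where i is the index where the walk leaves layer 1 and l is the index where it enters layer 4, and such a walk of length exactly n+2 exists iff some i satisfies i = l with edges (i,j), (j,k), (k,i) in G for some j, k. -/

import Mathlib

/-- The one-step transition relation of an NFA: `R p q` iff some letter takes `p` to `q`. -/
def NFA.rel {α σ : Type*} (A : NFA α σ) (p q : σ) : Prop := ∃ a, q ∈ A.step p a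

/-- There is a walk of exactly `m` steps of the relation `R` from `s` to `t`. -/
def RelPath {σ : Type*} (R : σ → σ → Prop) (m : ℕ) (s t : σ) : Prop :=
  ∃ p : ℕ → σ, p 0 = s ∧ p m = t ∧ ∀ i < m, R (p i) (p (i + 1))

/-- An NFA is acyclic if its transition diagram contains no nonempty cycle. -/
def NFA.Acyclic {α σ : Type*} (A : NFA α σ) : Prop :=
  ¬ ∃ (q : σ) (m : ℕ), 0 < m ∧ RelPath A.rel m q q

/-- The four-layer unary NFA built from a simple graph `G` on `Fin n` for the triangle
reduction.  States are `(i, j)` with `i : Fin n` a vertex and `j : Fin 4` a layer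
(layers 1–4 of the paper are `0,1,2,3` here).  Layer 0 and layer 3 are chains
`(i,·) → (i+1,·)`, and `(i, j) → (k, j+1)` is a transition iff `G.Adj i k`.
The start state is `(0, 0)` and the unique accept state is `(n-1, 3)`. -/
def triangleNFA (n : ℕ) [NeZero n] (G : SimpleGraph (Fin n)) :
    NFA Unit (Fin n × Fin 4) where
  step p _ :=
    {q | ((p.2 = 0 ∨ p.2 = 3) ∧ q.2 = p.2 ∧ (q.1 : ℕ) = (p.1 : ℕ) + 1) ∨
         ((q.2 : ℕ) = (p.2 : ℕ) + 1 ∧ G.Adj p.1 q.1)}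
  start := {(0, 0)}
  accept := {q | (q.1 : ℕ) = n - 1 ∧ q.2 = 3}

/-!
Work backwards from the accept state: the states from which it is reached in exactly `m` steps
are described layer by layer. `(x, 3)` qualifies iff `x + m + 1 = n`, each earlier layer prefixes
an edge of `G`, and layer `0` may first advance along its chain. From the start state `(0, 0)` the
walk lengths are therefore exactly the numbers `i + 3 + (n - 1 - l)` for edge paths
`i → j → k → l` in `G`, and length `n + 2` forces `l = i`, a triangle.
-/

section RelPath

variable {σ : Type*} {R : σ → σ → Prop}

theorem relPath_zero {s t : σ} : RelPath R 0 s t ↔ s = t :=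
  ⟨fun ⟨_, h0, h1, _⟩ => h0.symm.trans h1, fun h => ⟨fun _ => s, rfl, h, by simp⟩⟩

theorem relPath_succ {m : ℕ} {s u : σ} :
    RelPath R (m + 1) s u ↔ ∃ t, R s t ∧ RelPath R m t u := by
  constructor
  · rintro ⟨p, rfl, hu, hp⟩
    exact ⟨p 1, hp 0 m.succ_pos, fun i => p (i + 1), rfl, hu, fun i hi => hp (i + 1) (by omega)⟩
  · rintro ⟨t, hst, q, rfl, hu, hq⟩
    refine ⟨fun | 0 => s | i + 1 => q i, rfl, hu, ?_⟩
    rintro (_ | i) hi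
    exacts [hst, hq i (by omega)]

end RelPath

namespace NFA

variable {α σ : Type*} (A : NFA α σ)

def ReachesAcceptIn (m : ℕ) (s : σ) : Prop := ∃ a ∈ A.accept, RelPath A.rel m s a

variable {A}

theorem reachesAcceptIn_zero {s : σ} : A.ReachesAcceptIn 0 s ↔ s ∈ A.accept := by
  simp [ReachesAcceptIn, relPath_zero]

theorem reachesAcceptIn_succ {m : ℕ} {s : σ} :
    A.ReachesAcceptIn (m + 1) s ↔ ∃ t, A.rel s t ∧ A.ReachesAcceptIn m t := by
  simp only [ReachesAcceptIn, relPath_succ]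
  tauto

theorem exists_accepting_walk_iff {m : ℕ} :
    (∃ p : ℕ → σ, p 0 ∈ A.start ∧ p m ∈ A.accept ∧ ∀ t < m, A.rel (p t) (p (t + 1))) ↔
      ∃ s ∈ A.start, A.ReachesAcceptIn m s := by
  constructor
  · rintro ⟨p, h0, hm, hp⟩
    exact ⟨p 0, h0, p m, hm, p, rfl, rfl, hp⟩
  · rintro ⟨s, hs, a, ha, p, rfl, rfl, hp⟩
    exact ⟨p, hs, ha, hp⟩

end NFA

namespace TriangleNFA

variable {n : ℕ} [NeZero n] {G : SimpleGraph (Fin n)}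

theorem rel_layer0 {x : Fin n} {q : Fin n × Fin 4} : (triangleNFA n G).rel (x, 0) q ↔
    (q.2 = 0 ∧ (q.1 : ℕ) = x + 1) ∨ (q.2 = 1 ∧ G.Adj x q.1) := by
  obtain ⟨y, b⟩ := q
  fin_cases b <;> simp [NFA.rel, triangleNFA]

theorem rel_layer1 {x : Fin n} {q : Fin n × Fin 4} : (triangleNFA n G).rel (x, 1) q ↔
    q.2 = 2 ∧ G.Adj x q.1 := by
  obtain ⟨y, b⟩ := q
  fin_cases b <;> simp [NFA.rel, triangleNFA]

theorem rel_layer2 {x : Fin n} {q : Fin n × Fin 4} : (triangleNFA n G).rel (x, 2) q ↔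
    q.2 = 3 ∧ G.Adj x q.1 := by
  obtain ⟨y, b⟩ := q
  fin_cases b <;> simp [NFA.rel, triangleNFA]

theorem rel_layer3 {x : Fin n} {q : Fin n × Fin 4} : (triangleNFA n G).rel (x, 3) q ↔
    q.2 = 3 ∧ (q.1 : ℕ) = x + 1 := by
  obtain ⟨y, b⟩ := q
  fin_cases b <;> simp [NFA.rel, triangleNFA]

theorem mem_accept {x : Fin n} {b : Fin 4} :
    (x, b) ∈ (triangleNFA n G).accept ↔ (x : ℕ) = n - 1 ∧ b = 3 :=
  Iff.rfl

theorem reachesAcceptIn_layer3 {m : ℕ} {x : Fin n} :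
    (triangleNFA n G).ReachesAcceptIn m (x, 3) ↔ (x : ℕ) + m + 1 = n := by
  induction m generalizing x with
  | zero =>
    rw [NFA.reachesAcceptIn_zero, mem_accept]
    exact ⟨fun ⟨h, _⟩ => by omega, fun h => ⟨by omega, rfl⟩⟩
  | succ m ih =>
    simp only [NFA.reachesAcceptIn_succ, rel_layer3, Prod.exists]
    constructor
    · rintro ⟨y, _, ⟨rfl, hy⟩, h⟩
      rw [ih] at h
      omega
    · intro h
      exact ⟨⟨x + 1, by omega⟩, 3, ⟨rfl, rfl⟩, ih.2 (by simp only; omega)⟩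

theorem reachesAcceptIn_layer2 {m : ℕ} {x : Fin n} :
    (triangleNFA n G).ReachesAcceptIn m (x, 2) ↔ ∃ l : Fin n, G.Adj x l ∧ (l : ℕ) + m = n := by
  cases m with
  | zero =>
    rw [NFA.reachesAcceptIn_zero, mem_accept]
    exact iff_of_false (fun h => absurd h.2 (by decide)) fun ⟨_, _, h⟩ => by omega
  | succ m =>
    simp [NFA.reachesAcceptIn_succ, rel_layer2, reachesAcceptIn_layer3, add_assoc]

theorem reachesAcceptIn_layer1 {m : ℕ} {x : Fin n} :
    (triangleNFA n G).ReachesAcceptIn m (x, 1) ↔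
      ∃ k l : Fin n, G.Adj x k ∧ G.Adj k l ∧ (l : ℕ) + m = n + 1 := by
  cases m with
  | zero =>
    rw [NFA.reachesAcceptIn_zero, mem_accept]
    exact iff_of_false (fun h => absurd h.2 (by decide)) fun ⟨_, _, _, _, h⟩ => by omega
  | succ m =>
    simp [NFA.reachesAcceptIn_succ, rel_layer1, reachesAcceptIn_layer2, ← add_assoc]

theorem reachesAcceptIn_layer0 {m : ℕ} {x : Fin n} :
    (triangleNFA n G).ReachesAcceptIn m (x, 0) ↔ ∃ i j k l : Fin n,
      x ≤ i ∧ G.Adj i j ∧ G.Adj j k ∧ G.Adj k l ∧ (x : ℕ) + l + m = i + n + 2 := by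
  induction m generalizing x with
  | zero =>
    rw [NFA.reachesAcceptIn_zero, mem_accept]
    exact iff_of_false (fun h => absurd h.2 (by decide)) fun ⟨_, _, _, _, _, _, _, _, h⟩ => by omega
  | succ m ih =>
    rw [NFA.reachesAcceptIn_succ]
    simp only [rel_layer0, Prod.exists, and_assoc, or_and_right, exists_or, exists_eq_left, ih,
      reachesAcceptIn_layer1]
    constructor
    · rintro (⟨y, hy, i, j, k, l, hyi, hij, hjk, hkl, h⟩ | ⟨j, hxj, k, l, hjk, hkl, h⟩)
      · exact ⟨i, j, k, l, by omega, hij, hjk, hkl, by omega⟩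
      · exact ⟨x, j, k, l, le_rfl, hxj, hjk, hkl, by omega⟩
    · rintro ⟨i, j, k, l, hxi, hij, hjk, hkl, h⟩
      rcases hxi.eq_or_lt with rfl | hxi
      · exact Or.inr ⟨j, hij, k, l, hjk, hkl, by omega⟩
      · exact Or.inl ⟨⟨x + 1, by omega⟩, rfl, i, j, k, l, hxi, hij, hjk, hkl, by simp only; omega⟩

theorem exists_accepting_walk_iff {r : ℕ} :
    (∃ p : ℕ → Fin n × Fin 4, p 0 ∈ (triangleNFA n G).start ∧ p r ∈ (triangleNFA n G).accept ∧
        ∀ t < r, (triangleNFA n G).rel (p t) (p (t + 1))) ↔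
      ∃ i j k l : Fin n, G.Adj i j ∧ G.Adj j k ∧ G.Adj k l ∧ (l : ℕ) + r = i + n + 2 := by
  rw [NFA.exists_accepting_walk_iff, show (triangleNFA n G).start = {(0, 0)} from rfl]
  simp [reachesAcceptIn_layer0]

end TriangleNFA

/-- Every walk from the start state to the accept state of the four-layer NFA has
length r = i + 3 + (n - 1 - l) for some i, l (so 3 ≤ r ≤ 2n + 1), and a walk of
length exactly n + 2 exists iff G has vertices i, j, k with edges (i,j), (j,k), (k,i). -/
theorem triangleNFA_walk_lengths {n : ℕ} [NeZero n] (G : SimpleGraph (Fin n)) :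
    (∀ (r : ℕ) (p : ℕ → Fin n × Fin 4),
        p 0 ∈ (triangleNFA n G).start → p r ∈ (triangleNFA n G).accept →
        (∀ t < r, (triangleNFA n G).rel (p t) (p (t + 1))) →
        ∃ i l : Fin n,
          r = (i : ℕ) + 3 + (n - 1 - (l : ℕ)) ∧ 3 ≤ r ∧ r ≤ 2 * n + 1) ∧
    ((∃ p : ℕ → Fin n × Fin 4,
        p 0 ∈ (triangleNFA n G).start ∧ p (n + 2) ∈ (triangleNFA n G).accept ∧
        ∀ t < n + 2, (triangleNFA n G).rel (p t) (p (t + 1))) ↔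
      ∃ i j k : Fin n, G.Adj i j ∧ G.Adj j k ∧ G.Adj k i) := by
  refine ⟨fun r p h0 hr hp => ?_, ?_⟩
  · obtain ⟨i, -, -, l, -, -, -, hr⟩ := TriangleNFA.exists_accepting_walk_iff.1 ⟨p, h0, hr, hp⟩
    exact ⟨i, l, by omega, by omega, by omega⟩
  · rw [TriangleNFA.exists_accepting_walk_iff]
    constructor
    · rintro ⟨i, j, k, l, hij, hjk, hkl, hr⟩
      obtain rfl : l = i := by omega
      exact ⟨l, j, k, hij, hjk, hkl⟩
    · rintro ⟨i, j, k, hij, hjk, hki⟩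
      exact ⟨i, j, k, i, hij, hjk, hki, by omega⟩
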